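/- Let X be a compact metric space and let A, B be disjoint closed subsets of X. Then either there exists a connected compact subset C of X with C ∩ A ≠ ∅ and C ∩ B ≠ ∅, or X can be written as the union of two disjoint compact subsets X_A and X_B with A ⊆ X_A and B ⊆ X_B. -/

import Mathlib

/-! In a compact Hausdorff space the connected component of a point is the intersection of its
clopen neighbourhoods. So if no component through a point of `A` meets `B`, compactness of `B`
gives every point of `A` a clopen neighbourhood missing `B`, and compactness of `A` lets finitely
many of them cover `A`; their union and its complement are the two compact pieces. -/

open Set

section

variable {X : Type*} [TopologicalSpace X]

theorem exists_isClopen_mem_disjoint_of_disjoint_connectedComponent [CompactSpace X] [T2Space X]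
    {x : X} {B : Set X} (hB : IsClosed B) (h : Disjoint (connectedComponent x) B) :
    ∃ U : Set X, IsClopen U ∧ x ∈ U ∧ Disjoint U B := by
  rw [connectedComponent_eq_iInter_isClopen, disjoint_iff_inter_eq_empty, inter_comm] at h
  obtain ⟨t, ht⟩ := hB.isCompact.elim_finite_subfamily_closed _ (fun U => U.2.1.isClosed) h
  refine ⟨⋂ U ∈ t, U, isClopen_biInter_finset fun U _ => U.2.1, mem_iInter₂.2 fun U _ => U.2.2, ?_⟩
  rwa [disjoint_iff_inter_eq_empty, inter_comm]

theorem IsCompact.exists_isClopen_superset_disjoint {K B : Set X} (hK : IsCompact K)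
    (h : ∀ x ∈ K, ∃ U : Set X, IsClopen U ∧ x ∈ U ∧ Disjoint U B) :
    ∃ U : Set X, IsClopen U ∧ K ⊆ U ∧ Disjoint U B := by
  choose U hU using h
  obtain ⟨t, ht⟩ := hK.elim_nhds_subcover' U fun x hx => (hU x hx).1.isOpen.mem_nhds (hU x hx).2.1
  exact ⟨⋃ x ∈ t, U x x.2, isClopen_biUnion_finset fun x _ => (hU x x.2).1, ht,
    disjoint_iUnion₂_left.2 fun x _ => (hU x x.2).2.2⟩

end

theorem continuum_or_separation_general {X : Type*} [MetricSpace X] [CompactSpace X]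
    (A B : Set X) (hA : IsClosed A) (hB : IsClosed B) :
    (∃ C : Set X, IsCompact C ∧ IsConnected C ∧ (C ∩ A).Nonempty ∧ (C ∩ B).Nonempty) ∨
    (∃ XA XB : Set X, IsCompact XA ∧ IsCompact XB ∧ Disjoint XA XB ∧
      XA ∪ XB = Set.univ ∧ A ⊆ XA ∧ B ⊆ XB) := by
  by_cases h : ∀ a ∈ A, Disjoint (connectedComponent a) B
  · obtain ⟨U, hU, hAU, hUB⟩ := hA.isCompact.exists_isClopen_superset_disjoint fun a ha =>
      exists_isClopen_mem_disjoint_of_disjoint_connectedComponent hB (h a ha)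
    exact Or.inr ⟨U, Uᶜ, hU.isClosed.isCompact, hU.compl.isClosed.isCompact, disjoint_compl_right,
      union_compl_self U, hAU, hUB.subset_compl_left⟩
  · obtain ⟨a, ha, haB⟩ := not_forall₂.1 h
    exact Or.inl ⟨connectedComponent a, isClosed_connectedComponent.isCompact,
      isConnected_connectedComponent, ⟨a, mem_connectedComponent, ha⟩,
      not_disjoint_iff_nonempty_inter.1 haB⟩

/-- In a compact metric space, given disjoint closed subsets `A`, `B`,
either there is a subcontinuum meeting both, or the space splits into disjoint compact
sets containing `A` and `B` respectively. -/
theorem continuum_or_separation {X : Type*} [MetricSpace X] [CompactSpace X]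
    (A B : Set X) (hA : IsClosed A) (hB : IsClosed B) (hAB : Disjoint A B) :
    (∃ C : Set X, IsCompact C ∧ IsConnected C ∧ (C ∩ A).Nonempty ∧ (C ∩ B).Nonempty) ∨
    (∃ XA XB : Set X, IsCompact XA ∧ IsCompact XB ∧ Disjoint XA XB ∧
      XA ∪ XB = Set.univ ∧ A ⊆ XA ∧ B ⊆ XB) :=
  continuum_or_separation_general A B hA hB
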